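/- arXiv:1810.09666 — 2 statements merged into one kernel-verified Lean document; each statement's English description precedes it below -/
import Mathlib

section
/- Let K ≥ 2, η > 0, n ≥ 1, and let ℓ_1, …, ℓ_n : {1,…,K} → [0,∞) be nonnegative loss vectors. Define weights w_{i,1} = 1 and w_{i,j+1} = w_{i,j}·exp(−η·ℓ_j(i)), and probabilities p_{i,j} = w_{i,j}/∑_{k=1}^K w_{k,j}. Then for every action k′ ∈ {1,…,K}: ∑_{j=1}^n ∑_{i=1}^K p_{i,j}·ℓ_j(i) − ∑_{j=1}^n ℓ_j(k′) ≤ log(K)/η + (η/2)·∑_{j=1}^n ∑_{i=1}^K p_{i,j}·ℓ_j(i)². -/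
/-!
Potential argument for `W_j = ∑ₖ w j k`. Since `exp (-x) ≤ 1 - x + x²/2` for `x ≥ 0` and
`1 + y ≤ exp y`, round `j` multiplies the potential by at most `exp (-η Lⱼ + η²/2 Qⱼ)`, where `Lⱼ`
and `Qⱼ` are the first and second moments of `ℓ j` under `p j`; hence
`W_{n+1} ≤ K exp (∑ⱼ (-η Lⱼ + η²/2 Qⱼ))`. On the other hand
`W_{n+1} ≥ w (n+1) k' = exp (-η ∑ⱼ ℓ j k')`; taking logarithms and dividing by `η` gives the bound.
-/

open Finset Real

theorem Real.exp_neg_le_one_sub_add_sq_div_two {x : ℝ} (hx : 0 ≤ x) :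
    exp (-x) ≤ 1 - x + x ^ 2 / 2 := by
  have hderiv (t : ℝ) :
      HasDerivAt (fun t => 1 - t + t ^ 2 / 2 - exp (-t)) (-1 + t + exp (-t)) t :=
    ((((hasDerivAt_id t).const_sub 1).add ((hasDerivAt_pow 2 t).div_const 2)).sub
      (hasDerivAt_neg t).exp).congr_deriv (by norm_num)
  have hmono := monotone_of_hasDerivAt_nonneg hderiv
    (fun t => show (0 : ℝ) ≤ _ by linarith [add_one_le_exp (-t)])
  simpa using hmono hx

section

variable {ι : Type*} [Fintype ι]

theorem sum_mul_exp_neg_le_exp {p ℓ : ι → ℝ} {η : ℝ} (hp : ∀ i, 0 ≤ p i) (hp1 : ∑ i, p i = 1)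
    (hη : 0 ≤ η) (hℓ : ∀ i, 0 ≤ ℓ i) :
    ∑ i, p i * exp (-η * ℓ i)
      ≤ exp (-η * ∑ i, p i * ℓ i + η ^ 2 / 2 * ∑ i, p i * ℓ i ^ 2) := by
  calc ∑ i, p i * exp (-η * ℓ i)
      ≤ ∑ i, p i * (1 - η * ℓ i + (η * ℓ i) ^ 2 / 2) := by
        gcongr with i
        · exact hp i
        · rw [neg_mul]
          exact exp_neg_le_one_sub_add_sq_div_two (mul_nonneg hη (hℓ i))
    _ = -η * ∑ i, p i * ℓ i + η ^ 2 / 2 * ∑ i, p i * ℓ i ^ 2 + ∑ i, p i := by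
        simp only [mul_sum, ← sum_add_distrib]
        exact sum_congr rfl fun i _ => by ring
    _ ≤ exp (-η * ∑ i, p i * ℓ i + η ^ 2 / 2 * ∑ i, p i * ℓ i ^ 2) := by
        rw [hp1]
        exact add_one_le_exp _

theorem sum_mul_exp_neg_le_sum_mul_exp {w ℓ : ι → ℝ} {η : ℝ} (hw : ∀ i, 0 ≤ w i)
    (hW : 0 < ∑ i, w i) (hη : 0 ≤ η) (hℓ : ∀ i, 0 ≤ ℓ i) :
    ∑ i, w i * exp (-η * ℓ i)
      ≤ (∑ k, w k) * exp (-η * ∑ i, (w i / ∑ k, w k) * ℓ i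
          + η ^ 2 / 2 * ∑ i, (w i / ∑ k, w k) * ℓ i ^ 2) := by
  have hnormalize : ∑ i, w i * exp (-η * ℓ i)
      = (∑ k, w k) * ∑ i, (w i / ∑ k, w k) * exp (-η * ℓ i) := by
    rw [mul_sum]
    exact sum_congr rfl fun i _ => by field_simp
  rw [hnormalize]
  gcongr
  exact sum_mul_exp_neg_le_exp (fun i => div_nonneg (hw i) hW.le)
    (by rw [← sum_div, div_self hW.ne']) hη hℓ

end

section

variable {ι : Type*} {η : ℝ} {ℓ w : ℕ → ι → ℝ}

theorem weight_succ_eq (hwS : ∀ j, 1 ≤ j → ∀ i, w (j + 1) i = w j i * exp (-η * ℓ j i))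
    (m : ℕ) (i : ι) :
    w (m + 1) i = w 1 i * exp (-η * ∑ j ∈ Icc 1 m, ℓ j i) := by
  induction m with
  | zero => simp
  | succ m ih =>
    rw [hwS (m + 1) (by omega), ih, sum_Icc_succ_top (by omega), mul_assoc, ← exp_add, mul_add]

theorem sum_weight_succ_le [Fintype ι] [Nonempty ι]
    (hwS : ∀ j, 1 ≤ j → ∀ i, w (j + 1) i = w j i * exp (-η * ℓ j i))
    (hw1 : ∀ i, 0 < w 1 i) (hη : 0 ≤ η) (hℓ : ∀ j i, 0 ≤ ℓ j i) (m : ℕ) :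
    ∑ k, w (m + 1) k
      ≤ (∑ k, w 1 k) * exp (-η * ∑ j ∈ Icc 1 m, ∑ i, (w j i / ∑ k, w j k) * ℓ j i
          + η ^ 2 / 2 * ∑ j ∈ Icc 1 m, ∑ i, (w j i / ∑ k, w j k) * ℓ j i ^ 2) := by
  induction m with
  | zero => simp
  | succ m ih =>
    have hpos (i : ι) : 0 < w (m + 1) i := by
      rw [weight_succ_eq hwS]
      exact mul_pos (hw1 i) (exp_pos _)
    calc ∑ k, w (m + 2) k
        = ∑ i, w (m + 1) i * exp (-η * ℓ (m + 1) i) :=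
          sum_congr rfl fun i _ => hwS (m + 1) (by omega) i
      _ ≤ _ := sum_mul_exp_neg_le_sum_mul_exp (fun i => (hpos i).le)
          (sum_pos (fun i _ => hpos i) univ_nonempty) hη (hℓ (m + 1))
      _ ≤ _ := mul_le_mul_of_nonneg_right ih (exp_pos _).le
      _ = _ := by
        rw [mul_assoc, ← exp_add, sum_Icc_succ_top (by omega), sum_Icc_succ_top (by omega)]
        congr 2; ring

end

theorem statement10_general (K n : ℕ) (η : ℝ) (hη : 0 < η)
    (ℓ : ℕ → Fin K → ℝ) (hℓ : ∀ j i, 0 ≤ ℓ j i)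
    (w : ℕ → Fin K → ℝ)
    (hw1 : ∀ i, w 1 i = 1)
    (hwS : ∀ j, 1 ≤ j → ∀ i, w (j + 1) i = w j i * Real.exp (-η * ℓ j i))
    (k' : Fin K) :
    ∑ j ∈ Finset.Icc 1 n, ∑ i, (w j i / ∑ k, w j k) * ℓ j i
        - ∑ j ∈ Finset.Icc 1 n, ℓ j k'
      ≤ Real.log K / η
        + η / 2 * ∑ j ∈ Finset.Icc 1 n, ∑ i, (w j i / ∑ k, w j k) * (ℓ j i) ^ 2 := by
  have : Nonempty (Fin K) := ⟨k'⟩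
  have hK : (0 : ℝ) < K := by exact_mod_cast k'.pos
  have hweight : w (n + 1) k' = exp (-η * ∑ j ∈ Icc 1 n, ℓ j k') := by
    rw [weight_succ_eq hwS, hw1, one_mul]
  have hsingle : w (n + 1) k' ≤ ∑ k, w (n + 1) k :=
    single_le_sum (fun i _ => by rw [weight_succ_eq hwS, hw1]; positivity) (mem_univ k')
  have hpotential := sum_weight_succ_le hwS (fun i => (hw1 i).symm ▸ one_pos) hη.le hℓ n
  simp only [hw1, sum_const, card_univ, Fintype.card_fin, nsmul_eq_mul, mul_one] at hpotential
  have hlog := (le_log_iff_exp_le (by positivity)).mpr (hweight ▸ hsingle.trans hpotential)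
  rw [log_mul hK.ne' (exp_pos _).ne', log_exp] at hlog
  rw [← mul_le_mul_iff_right₀ hη, mul_add, mul_div_cancel₀ _ hη.ne']
  linarith

/-- **Regret bound for the exponential-weights scheme.**
Weights `w 1 i = 1`, `w (j+1) i = w j i * exp (-η * ℓ j i)`, probabilities
`p j i = w j i / ∑ k, w j k`.  For every action `k'`,
`∑_{j=1}^n ∑_i p j i · ℓ j i − ∑_{j=1}^n ℓ j k' ≤ log K / η + (η/2) ∑_{j=1}^n ∑_i p j i · ℓ j i²`. -/
theorem statement10 (K n : ℕ) (hK : 2 ≤ K) (hn : 1 ≤ n) (η : ℝ) (hη : 0 < η)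
    (ℓ : ℕ → Fin K → ℝ) (hℓ : ∀ j i, 0 ≤ ℓ j i)
    (w : ℕ → Fin K → ℝ)
    (hw1 : ∀ i, w 1 i = 1)
    (hwS : ∀ j, 1 ≤ j → ∀ i, w (j + 1) i = w j i * Real.exp (-η * ℓ j i))
    (k' : Fin K) :
    ∑ j ∈ Finset.Icc 1 n, ∑ i, (w j i / ∑ k, w j k) * ℓ j i
        - ∑ j ∈ Finset.Icc 1 n, ℓ j k'
      ≤ Real.log K / η
        + η / 2 * ∑ j ∈ Finset.Icc 1 n, ∑ i, (w j i / ∑ k, w j k) * (ℓ j i) ^ 2 :=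
  statement10_general K n η hη ℓ hℓ w hw1 hwS k'
end

section
/- Let n be a positive integer, B > 0, T > 0, let m_1, …, m_n ≥ 0, and let r_1, …, r_n be reals with 0 ≤ r_j ≤ B for all j and ∑_{j=1}^n r_j ≤ T. Let m_{(1)} ≥ m_{(2)} ≥ ⋯ ≥ m_{(n)} be the values m_1, …, m_n sorted in non-increasing order. Then ∑_{j=1}^n m_j·r_j² ≤ B²·∑_{t=1}^{min(n, ⌈T/B⌉)} m_{(t)}. -/
/-!
Since `r j ≤ B`, `∑ m j (r j)² ≤ B ∑ m j r j`, and maximising `∑ m j r j` over `r j ∈ [0, B]`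
with `∑ r j ≤ B k`, `k = min n ⌈T / B⌉`, is a fractional knapsack. Weak duality with the
multiplier `c = m_(k)`, the `k`-th largest weight, bounds it by `B (∑ j (m j - c)⁺ + k c)`, and
for this `c` the bracket is exactly the sum of the `k` largest weights.
-/

open Finset

theorem List.SortedGE.antitone_getD {α : Type*} [Preorder α] {l : List α} (hl : l.SortedGE)
    {d : α} (hd : ∀ x ∈ l, d ≤ x) : Antitone (l.getD · d) := by
  intro i j hij
  simp only [List.getD_eq_getElem?_getD]
  by_cases hj : j < l.length
  · rw [List.getElem?_eq_getElem hj, List.getElem?_eq_getElem (hij.trans_lt hj)]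
    exact hl.antitone_get (show (⟨i, hij.trans_lt hj⟩ : Fin l.length) ≤ ⟨j, hj⟩ from hij)
  · rw [List.getElem?_eq_none (not_lt.mp hj), Option.getD_none]
    cases h : l[i]? with
    | none => exact le_rfl
    | some x => exact hd x (List.mem_of_getElem? h)

theorem List.sum_range_length_getD {α β : Type*} [AddCommMonoid β] (l : List α) (d : α)
    (f : α → β) : ∑ t ∈ Finset.range l.length, f (l.getD t d) = (l.map f).sum := by
  rw [Finset.sum_range, ← List.ofFn_getElem_eq_map, List.sum_ofFn]
  simp [List.getD_eq_getElem?_getD]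

theorem List.Perm.sum_range_getD {α β : Type*} [AddCommMonoid β] {n : ℕ} {l : List α}
    {v : Fin n → α} (h : l.Perm (List.ofFn v)) (d : α) (f : α → β) :
    ∑ t ∈ Finset.range n, f (l.getD t d) = ∑ j, f (v j) := by
  have hlen : l.length = n := h.length_eq.trans (List.length_ofFn)
  calc ∑ t ∈ Finset.range n, f (l.getD t d) = ∑ t ∈ Finset.range l.length, f (l.getD t d) := by
        rw [hlen]
    _ = ∑ j, f (v j) := by
        rw [l.sum_range_length_getD, (h.map f).sum_eq, List.map_ofFn, List.sum_ofFn]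
        rfl

/-- For `k = 0` the cutoff `a (k - 1)` is `a 0` (truncated subtraction) and both sides vanish. -/
theorem Antitone.sum_range_posPart_sub_add {a : ℕ → ℝ} (ha : Antitone a) {k N : ℕ}
    (hkN : k ≤ N) :
    ∑ t ∈ range N, max (a t - a (k - 1)) 0 + k * a (k - 1) = ∑ t ∈ range k, a t := by
  rw [← sum_range_add_sum_Ico _ hkN]
  have head : ∀ t ∈ range k, max (a t - a (k - 1)) 0 = a t - a (k - 1) := fun t ht =>
    max_eq_left (sub_nonneg.mpr (ha (by simp at ht; omega)))
  have tail : ∀ t ∈ Ico k N, max (a t - a (k - 1)) 0 = 0 := fun t ht =>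
    max_eq_right (sub_nonpos.mpr (ha (by simp at ht; omega)))
  rw [sum_congr rfl head, sum_congr rfl tail, sum_sub_distrib]
  simp

theorem mul_le_posPart_sub_mul_add {m r B : ℝ} (c : ℝ) (hr : r ∈ Set.Icc 0 B) :
    m * r ≤ max (m - c) 0 * B + c * r := by
  have hmc : (m - c) * r ≤ max (m - c) 0 * B :=
    (mul_le_mul_of_nonneg_right (le_max_left _ _) hr.1).trans
      (mul_le_mul_of_nonneg_left hr.2 (le_max_right _ _))
  linarith

/-- Weak duality for the fractional knapsack: `c` is the multiplier of the budget constraint. -/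
theorem sum_mul_le_of_sum_le {ι : Type*} (s : Finset ι) {m r : ι → ℝ} {B k c : ℝ}
    (hc : 0 ≤ c) (hr : ∀ j ∈ s, r j ∈ Set.Icc 0 B) (hsum : ∑ j ∈ s, r j ≤ B * k) :
    ∑ j ∈ s, m j * r j ≤ B * (∑ j ∈ s, max (m j - c) 0 + k * c) := by
  calc ∑ j ∈ s, m j * r j ≤ ∑ j ∈ s, (max (m j - c) 0 * B + c * r j) :=
        sum_le_sum fun j hj => mul_le_posPart_sub_mul_add c (hr j hj)
    _ = (∑ j ∈ s, max (m j - c) 0) * B + c * ∑ j ∈ s, r j := by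
        rw [sum_add_distrib, sum_mul, mul_sum]
    _ ≤ (∑ j ∈ s, max (m j - c) 0) * B + c * (B * k) := by gcongr
    _ = B * (∑ j ∈ s, max (m j - c) 0 + k * c) := by ring

theorem sq_le_mul_of_mem_Icc {r B : ℝ} (hr : r ∈ Set.Icc 0 B) : r ^ 2 ≤ B * r := by
  rw [sq]; exact mul_le_mul_of_nonneg_right hr.2 hr.1

theorem statement13_general (n : ℕ) (B T : ℝ) (hB : 0 < B)
    (m r : Fin n → ℝ) (hm : ∀ j, 0 ≤ m j)
    (hr : ∀ j, r j ∈ Set.Icc (0 : ℝ) B) (hsum : ∑ j, r j ≤ T) :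
    ∑ j, m j * (r j) ^ 2
      ≤ B ^ 2 * ∑ t ∈ Finset.range (min n ⌈T / B⌉₊),
          ((List.ofFn m).insertionSort (· ≥ ·)).getD t 0 := by
  set s := (List.ofFn m).insertionSort (· ≥ ·)
  set k := min n ⌈T / B⌉₊
  set c := s.getD (k - 1) 0
  have hperm : s.Perm (List.ofFn m) := List.perm_insertionSort _ _
  have hs0 : ∀ x ∈ s, 0 ≤ x := fun x hx => by
    obtain ⟨j, rfl⟩ := List.mem_ofFn.mp (hperm.subset hx)
    exact hm j
  have hs : Antitone (s.getD · 0) := List.sortedGE_insertionSort.antitone_getD hs0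
  have hc : 0 ≤ c := calc
    0 = s.getD (s.length + (k - 1)) 0 := (List.getD_eq_default _ _ (Nat.le_add_right _ _)).symm
    _ ≤ c := hs (Nat.le_add_left _ _)
  have hbudget : ∑ j, r j ≤ B * k := by
    rw [Nat.cast_min, mul_min_of_nonneg _ _ hB.le]
    refine le_min ?_ ?_
    · simpa [mul_comm] using sum_le_sum fun j (_ : j ∈ univ) => (hr j).2
    · exact hsum.trans ((div_le_iff₀' hB).mp (Nat.le_ceil _))
  have hsorted : ∑ j, max (m j - c) 0 = ∑ t ∈ range n, max (s.getD t 0 - c) 0 :=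
    (hperm.sum_range_getD 0 (fun x => max (x - c) 0)).symm
  calc ∑ j, m j * r j ^ 2 ≤ ∑ j, m j * (B * r j) :=
        sum_le_sum fun j _ => mul_le_mul_of_nonneg_left (sq_le_mul_of_mem_Icc (hr j)) (hm j)
    _ = B * ∑ j, m j * r j := by rw [mul_sum]; exact sum_congr rfl fun j _ => by ring
    _ ≤ B * (B * (∑ j, max (m j - c) 0 + k * c)) :=
        mul_le_mul_of_nonneg_left (sum_mul_le_of_sum_le _ hc (fun j _ => hr j) hbudget) hB.le
    _ = B ^ 2 * ∑ t ∈ range k, s.getD t 0 := by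
        rw [hsorted, hs.sum_range_posPart_sub_add (min_le_left _ _)]; ring

/-- Deterministic optimization bound: if `0 ≤ r j ≤ B`, `∑ j, r j ≤ T`, and `m j ≥ 0`,
then `∑ j, m j · (r j)² ≤ B² · ∑_{t=1}^{min(n, ⌈T/B⌉)} m_{(t)}`, where
`m_{(1)} ≥ m_{(2)} ≥ ⋯` are the values `m j` sorted in non-increasing order. -/
theorem statement13 (n : ℕ) (hn : 1 ≤ n) (B T : ℝ) (hB : 0 < B) (hT : 0 < T)
    (m r : Fin n → ℝ) (hm : ∀ j, 0 ≤ m j)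
    (hr : ∀ j, r j ∈ Set.Icc (0 : ℝ) B) (hsum : ∑ j, r j ≤ T) :
    ∑ j, m j * (r j) ^ 2
      ≤ B ^ 2 * ∑ t ∈ Finset.range (min n ⌈T / B⌉₊),
          ((List.ofFn m).insertionSort (· ≥ ·)).getD t 0 :=
  statement13_general n B T hB m r hm hr hsum
end
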